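/- arXiv:1701.09177 — 3 statements merged into one kernel-verified Lean document; each statement's English description precedes it below -/
import Mathlib

section
/- Let T > 0, N ∈ ℕ, π ∈ (0,1), and λ₁, λ₂ > 0 with λ₁ ≠ λ₂. For each n ∈ ℕ set Λ₁(n) = π λ₁^{N+n} e^{−Tλ₁}, Λ₂(n) = (1−π) λ₂^{N+n} e^{−Tλ₂}, and define the vector v_n ∈ ℝ³ by v_n = ( Λ₁(n)/π − Λ₂(n)/(1−π), ((N+n)/λ₁ − T) Λ₁(n), ((N+n)/λ₂ − T) Λ₂(n) ). If a vector w ∈ ℝ³ satisfies ⟨w, v_n⟩ = 0 for every n ∈ ℕ, then w = 0. Equivalently, the family {v_n : n ∈ ℕ} spans ℝ³. -/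
/-!
Expanding `⟨w, v n⟩ = 0` gives `(a + b n) λ₁ⁿ + (c + d n) λ₂ⁿ = 0` for every `n`, where `b` and `d`
are nonzero multiples of `w 1` and `w 2`, and `a` is a nonzero multiple of `w 0` once `w 1 = 0`.
For distinct nonzero `λ₁, λ₂` the sequences `λ₁ⁿ, n λ₁ⁿ, λ₂ⁿ, n λ₂ⁿ` are linearly independent,
already on `n = 0, 1, 2, 3`, so `a = b = c = d = 0` and hence `w = 0`.
-/

theorem linear_mul_pow_add_linear_mul_pow_eq_zero {R : Type*} [CommRing R] [NoZeroDivisors R]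
    {x y a b c d : R} (hxy : x ≠ y) (hx : x ≠ 0) (hy : y ≠ 0)
    (h : ∀ n : ℕ, (a + b * n) * x ^ n + (c + d * n) * y ^ n = 0) :
    a = 0 ∧ b = 0 ∧ c = 0 ∧ d = 0 := by
  have k0 := h 0
  have k1 := h 1
  have k2 := h 2
  have k3 := h 3
  push_cast at k0 k1 k2 k3
  have hxy' : x - y ≠ 0 := sub_ne_zero.mpr hxy
  have hbd : b * x = d * y := by
    have : (x - y) * (b * x - d * y) = 0 := by
      linear_combination k2 - (x + y) * k1 + x * y * k0
    exact sub_eq_zero.mp ((mul_eq_zero.mp this).resolve_left hxy')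
  have hb : b = 0 := by
    have : (x - y) * (b * x * (x - y)) = 0 := by
      linear_combination k3 - (x ^ 2 + x * y + y ^ 2) * k1 + (x ^ 2 * y + x * y ^ 2) * k0
        - (x - y) * (x + 2 * y) * hbd
    simpa [hxy', hx] using this
  have hd : d = 0 := by simpa [hb, hy, eq_comm] using hbd
  have ha : a = 0 := by
    have : a * (x - y) = 0 := by linear_combination k1 - y * k0 - x * hb - y * hd
    simpa [hxy'] using this
  exact ⟨ha, hb, by linear_combination k0 - ha, hd⟩

theorem poisson_mixture_gradients_annihilator_zero_general
    (T : ℝ) (N : ℕ) (pi : ℝ) (hpi : pi ∈ Set.Ioo (0 : ℝ) 1)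
    (lam₁ lam₂ : ℝ) (h₁ : 0 < lam₁) (h₂ : 0 < lam₂) (hne : lam₁ ≠ lam₂)
    (Λ₁ Λ₂ : ℕ → ℝ)
    (hΛ₁ : ∀ n, Λ₁ n = pi * lam₁ ^ (N + n) * Real.exp (-T * lam₁))
    (hΛ₂ : ∀ n, Λ₂ n = (1 - pi) * lam₂ ^ (N + n) * Real.exp (-T * lam₂))
    (v : ℕ → Fin 3 → ℝ)
    (hv : ∀ n, v n = ![Λ₁ n / pi - Λ₂ n / (1 - pi),
                       ((N + n : ℝ) / lam₁ - T) * Λ₁ n,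
                       ((N + n : ℝ) / lam₂ - T) * Λ₂ n])
    (w : Fin 3 → ℝ) (hw : ∀ n : ℕ, ∑ i, w i * v n i = 0) :
    w = 0 := by
  obtain ⟨hpi₀, hpi₁⟩ := hpi
  have hpi₀' : pi ≠ 0 := hpi₀.ne'
  have hpi₁' : 1 - pi ≠ 0 := (sub_pos.mpr hpi₁).ne'
  set E₁ := lam₁ ^ N * Real.exp (-T * lam₁)
  set E₂ := lam₂ ^ N * Real.exp (-T * lam₂)
  have hE₁ : E₁ ≠ 0 := by positivity
  have hE₂ : E₂ ≠ 0 := by positivity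
  have key : ∀ n : ℕ,
      (E₁ * (w 0 + w 1 * pi * (N / lam₁ - T)) + E₁ * w 1 * pi / lam₁ * n) * lam₁ ^ n
        + (E₂ * (-w 0 + w 2 * (1 - pi) * (N / lam₂ - T)) + E₂ * w 2 * (1 - pi) / lam₂ * n)
          * lam₂ ^ n = 0 := by
    intro n
    rw [← hw n, hv n, Fin.sum_univ_three]
    simp only [Matrix.cons_val_zero, Matrix.cons_val_one, Matrix.cons_val_two, Matrix.head_cons,
      Matrix.tail_cons, hΛ₁, hΛ₂, pow_add, E₁, E₂]
    field_simp
    ring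
  obtain ⟨ha, hb, -, hd⟩ :=
    linear_mul_pow_add_linear_mul_pow_eq_zero hne h₁.ne' h₂.ne' key
  have hw₁ : w 1 = 0 := by simpa [hE₁, hpi₀', h₁.ne'] using hb
  have hw₂ : w 2 = 0 := by simpa [hE₂, hpi₁', h₂.ne'] using hd
  have hw₀ : w 0 = 0 := by simpa [hE₁, hw₁] using ha
  ext i
  fin_cases i <;> assumption

/-- **Key lemma for local identifiability of a two-component Poisson mixture.**
No nonzero vector `w ∈ ℝ³` annihilates all the gradient vectors
`v n = (Λ₁(n)/π − Λ₂(n)/(1−π), ((N+n)/λ₁ − T)Λ₁(n), ((N+n)/λ₂ − T)Λ₂(n))`,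
where `Λ₁(n) = π λ₁^{N+n} e^{−Tλ₁}` and `Λ₂(n) = (1−π) λ₂^{N+n} e^{−Tλ₂}`,
and `π ∈ (0,1)` is the mixture weight. -/
theorem poisson_mixture_gradients_annihilator_zero
    (T : ℝ) (hT : 0 < T) (N : ℕ) (pi : ℝ) (hpi : pi ∈ Set.Ioo (0 : ℝ) 1)
    (lam₁ lam₂ : ℝ) (h₁ : 0 < lam₁) (h₂ : 0 < lam₂) (hne : lam₁ ≠ lam₂)
    (Λ₁ Λ₂ : ℕ → ℝ)
    (hΛ₁ : ∀ n, Λ₁ n = pi * lam₁ ^ (N + n) * Real.exp (-T * lam₁))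
    (hΛ₂ : ∀ n, Λ₂ n = (1 - pi) * lam₂ ^ (N + n) * Real.exp (-T * lam₂))
    (v : ℕ → Fin 3 → ℝ)
    (hv : ∀ n, v n = ![Λ₁ n / pi - Λ₂ n / (1 - pi),
                       ((N + n : ℝ) / lam₁ - T) * Λ₁ n,
                       ((N + n : ℝ) / lam₂ - T) * Λ₂ n])
    (w : Fin 3 → ℝ) (hw : ∀ n : ℕ, ∑ i, w i * v n i = 0) :
    w = 0 :=
  poisson_mixture_gradients_annihilator_zero_general T N pi hpi lam₁ lam₂ h₁ h₂ hne Λ₁ Λ₂ hΛ₁ hΛ₂ v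
    hv w hw
end

section
/- Fix T > 0. For θ = (π, λ₁, λ₂) ∈ (0,1) × ℝ_{>0} × ℝ_{>0} and n ∈ ℕ, define p_n(θ) = π λ₁ⁿ e^{−Tλ₁} + (1−π) λ₂ⁿ e^{−Tλ₂}. Then for every parameter point θ₀ = (π⁰, λ₁⁰, λ₂⁰) with π⁰ ∈ (0,1), λ₁⁰, λ₂⁰ > 0, and λ₁⁰ ≠ λ₂⁰, there exists an open neighborhood U ⊆ (0,1) × ℝ_{>0} × ℝ_{>0} of θ₀ such that the map θ ↦ (p_n(θ))_{n∈ℕ} is injective on U; in particular, θ₀ is locally identifiable: no θ ∈ U with θ ≠ θ₀ satisfies p_n(θ) = p_n(θ₀) for all n ∈ ℕ. -/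
open Filter Real Topology

private lemma geom_no_gt (A B A' B' l1 l2 m1 m2 : ℝ)
    (hA : 0 < A) (hB : 0 < B) (hA' : 0 < A') (hB' : 0 < B')
    (hl2 : 0 < l2) (h12 : l2 < l1) (hm2 : 0 < m2) (hm12 : m2 < m1)
    (h : ∀ n : ℕ, A * l1 ^ n + B * l2 ^ n = A' * m1 ^ n + B' * m2 ^ n) :
    ¬ m1 < l1 := by
  intro hlt
  have hl1 : 0 < l1 := lt_trans hl2 h12
  have hr : ∀ x : ℝ, 0 ≤ x → x < l1 →
      Tendsto (fun n : ℕ => (x / l1) ^ n) atTop (nhds 0) := by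
    intro x hx hxl
    exact tendsto_pow_atTop_nhds_zero_of_lt_one (by positivity)
      ((div_lt_one hl1).mpr hxl)
  have hfun : ∀ n : ℕ, A + B * (l2 / l1) ^ n
      = A' * (m1 / l1) ^ n + B' * (m2 / l1) ^ n := by
    intro n
    have hl1n : (l1 : ℝ) ^ n ≠ 0 := pow_ne_zero _ hl1.ne'
    rw [div_pow, div_pow, div_pow]
    field_simp
    linarith [h n]
  have t1 : Tendsto (fun n : ℕ => A + B * (l2 / l1) ^ n) atTop (nhds A) := by
    have := ((hr l2 hl2.le h12).const_mul B).const_add A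
    simpa using this
  have t2 : Tendsto (fun n : ℕ => A' * (m1 / l1) ^ n + B' * (m2 / l1) ^ n)
      atTop (nhds 0) := by
    have h1 := (hr m1 (le_of_lt (hm2.trans hm12)) hlt).const_mul A'
    have h2 := (hr m2 hm2.le (hm12.trans hlt)).const_mul B'
    simpa using h1.add h2
  have t1' : Tendsto (fun n : ℕ => A + B * (l2 / l1) ^ n) atTop (nhds 0) := by
    simpa only [← hfun] using t2
  have := tendsto_nhds_unique t1 t1'
  linarith

private lemma geom_unique (A B A' B' l1 l2 m1 m2 : ℝ)
    (hA : 0 < A) (hB : 0 < B) (hA' : 0 < A') (hB' : 0 < B')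
    (hl2 : 0 < l2) (h12 : l2 < l1) (hm2 : 0 < m2) (hm12 : m2 < m1)
    (h : ∀ n : ℕ, A * l1 ^ n + B * l2 ^ n = A' * m1 ^ n + B' * m2 ^ n) :
    A = A' ∧ B = B' ∧ l1 = m1 ∧ l2 = m2 := by
  have hl1 : 0 < l1 := lt_trans hl2 h12
  have hm1 : 0 < m1 := lt_trans hm2 hm12
  have h1 : l1 = m1 := by
    have e1 := geom_no_gt A B A' B' l1 l2 m1 m2 hA hB hA' hB' hl2 h12 hm2 hm12 h
    have e2 := geom_no_gt A' B' A B m1 m2 l1 l2 hA' hB' hA hB hm2 hm12 hl2 h12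
      (fun n => (h n).symm)
    exact le_antisymm (not_lt.mp e1) (not_lt.mp e2)
  subst h1
  -- show A = A'
  have hr : ∀ x : ℝ, 0 ≤ x → x < l1 →
      Tendsto (fun n : ℕ => (x / l1) ^ n) atTop (nhds 0) := by
    intro x hx hxl
    exact tendsto_pow_atTop_nhds_zero_of_lt_one (by positivity)
      ((div_lt_one hl1).mpr hxl)
  have hfun : ∀ n : ℕ, A + B * (l2 / l1) ^ n = A' + B' * (m2 / l1) ^ n := by
    intro n
    have hl1n : (l1 : ℝ) ^ n ≠ 0 := pow_ne_zero _ hl1.ne'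
    rw [div_pow, div_pow]
    field_simp
    linarith [h n]
  have t1 : Tendsto (fun n : ℕ => A + B * (l2 / l1) ^ n) atTop (nhds A) := by
    have := ((hr l2 hl2.le h12).const_mul B).const_add A
    simpa using this
  have t2 : Tendsto (fun n : ℕ => A + B * (l2 / l1) ^ n) atTop (nhds A') := by
    have := ((hr m2 hm2.le hm12).const_mul B').const_add A'
    simpa only [← hfun, mul_zero, add_zero] using this
  have hAA : A = A' := tendsto_nhds_unique t1 t2
  subst hAA
  -- now B * l2^n = B' * m2^n
  have hB2 : ∀ n : ℕ, B * l2 ^ n = B' * m2 ^ n := by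
    intro n; linarith [h n]
  have hBB : B = B' := by have := hB2 0; simpa using this
  subst hBB
  have hl2m2 : l2 = m2 := by
    have := hB2 1
    simp only [pow_one] at this
    exact mul_left_cancel₀ hB.ne' this
  exact ⟨rfl, rfl, rfl, hl2m2⟩

private lemma mix_inj (T : ℝ) (π1 π2 a1 a2 b1 b2 : ℝ)
    (hπ1 : π1 ∈ Set.Ioo (0:ℝ) 1) (hπ2 : π2 ∈ Set.Ioo (0:ℝ) 1)
    (hb1 : 0 < b1) (hab1 : b1 < a1) (hb2 : 0 < b2) (hab2 : b2 < a2)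
    (h : ∀ n : ℕ, π1 * a1 ^ n * Real.exp (-T * a1) + (1 - π1) * b1 ^ n * Real.exp (-T * b1)
        = π2 * a2 ^ n * Real.exp (-T * a2) + (1 - π2) * b2 ^ n * Real.exp (-T * b2)) :
    π1 = π2 ∧ a1 = a2 ∧ b1 = b2 := by
  have hA : 0 < π1 * Real.exp (-T * a1) := mul_pos hπ1.1 (Real.exp_pos _)
  have hB : 0 < (1 - π1) * Real.exp (-T * b1) :=
    mul_pos (by linarith [hπ1.2]) (Real.exp_pos _)
  have hA' : 0 < π2 * Real.exp (-T * a2) := mul_pos hπ2.1 (Real.exp_pos _)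
  have hB' : 0 < (1 - π2) * Real.exp (-T * b2) :=
    mul_pos (by linarith [hπ2.2]) (Real.exp_pos _)
  obtain ⟨eA, eB, e1, e2⟩ := geom_unique (π1 * Real.exp (-T * a1))
    ((1 - π1) * Real.exp (-T * b1)) (π2 * Real.exp (-T * a2))
    ((1 - π2) * Real.exp (-T * b2)) a1 b1 a2 b2 hA hB hA' hB' hb1 hab1 hb2 hab2
    (fun n => by linear_combination h n)
  subst e1; subst e2
  have hπ : π1 = π2 := mul_right_cancel₀ (Real.exp_ne_zero _) eA
  exact ⟨hπ, rfl, rfl⟩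

/-- **Local identifiability of a mixture of two homogeneous Poisson processes.**
With `p n (π, λ₁, λ₂) = π λ₁ⁿ e^{−Tλ₁} + (1−π) λ₂ⁿ e^{−Tλ₂}`, every parameter
point `θ₀ = (π⁰, λ₁⁰, λ₂⁰)` with `π⁰ ∈ (0,1)`, `λ₁⁰, λ₂⁰ > 0`, `λ₁⁰ ≠ λ₂⁰` has
an open neighborhood `U ⊆ (0,1) × ℝ_{>0} × ℝ_{>0}` on which `θ ↦ (p n θ)_{n∈ℕ}`
is injective; in particular no `θ ∈ U`, `θ ≠ θ₀`, satisfies `p n θ = p n θ₀`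
for all `n`. -/
theorem poisson_mixture_locally_identifiable
    (T : ℝ) (hT : 0 < T)
    (p : ℕ → ℝ × ℝ × ℝ → ℝ)
    (hp : ∀ n θ, p n θ = θ.1 * θ.2.1 ^ n * Real.exp (-T * θ.2.1)
        + (1 - θ.1) * θ.2.2 ^ n * Real.exp (-T * θ.2.2))
    (θ₀ : ℝ × ℝ × ℝ) (hπ : θ₀.1 ∈ Set.Ioo (0 : ℝ) 1)
    (hl₁ : 0 < θ₀.2.1) (hl₂ : 0 < θ₀.2.2) (hne : θ₀.2.1 ≠ θ₀.2.2) :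
    ∃ U : Set (ℝ × ℝ × ℝ), IsOpen U ∧ θ₀ ∈ U ∧
      U ⊆ Set.Ioo (0 : ℝ) 1 ×ˢ (Set.Ioi (0 : ℝ) ×ˢ Set.Ioi (0 : ℝ)) ∧
      Set.InjOn (fun θ => fun n : ℕ => p n θ) U ∧
      ∀ θ ∈ U, θ ≠ θ₀ → ¬ (∀ n : ℕ, p n θ = p n θ₀) := by
  have key : ∀ U : Set (ℝ × ℝ × ℝ), IsOpen U → θ₀ ∈ U →
      U ⊆ Set.Ioo (0 : ℝ) 1 ×ˢ (Set.Ioi (0 : ℝ) ×ˢ Set.Ioi (0 : ℝ)) →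
      Set.InjOn (fun θ => fun n : ℕ => p n θ) U →
      ∃ U : Set (ℝ × ℝ × ℝ), IsOpen U ∧ θ₀ ∈ U ∧
      U ⊆ Set.Ioo (0 : ℝ) 1 ×ˢ (Set.Ioi (0 : ℝ) ×ˢ Set.Ioi (0 : ℝ)) ∧
      Set.InjOn (fun θ => fun n : ℕ => p n θ) U ∧
      ∀ θ ∈ U, θ ≠ θ₀ → ¬ (∀ n : ℕ, p n θ = p n θ₀) := by
    intro U hopen hmem hsub hinj
    refine ⟨U, hopen, hmem, hsub, hinj, ?_⟩
    intro θ hθ hneθ hall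
    exact hneθ (hinj hθ hmem (funext hall))
  rcases hne.lt_or_gt with hlt | hlt
  · -- λ₁⁰ < λ₂⁰ : use b = fst, a = snd
    refine key (Set.Ioo (0:ℝ) 1 ×ˢ {x : ℝ × ℝ | 0 < x.1 ∧ x.1 < x.2}) ?_ ?_ ?_ ?_
    · exact isOpen_Ioo.prod
        ((isOpen_lt continuous_const continuous_fst).inter
          (isOpen_lt continuous_fst continuous_snd))
    · exact ⟨hπ, hl₁, hlt⟩
    · rintro ⟨a, b, c⟩ ⟨h1, h2, h3⟩
      exact ⟨h1, h2, lt_trans h2 h3⟩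
    · rintro ⟨π1, a1, b1⟩ ⟨hπ1, hb1, hab1⟩ ⟨π2, a2, b2⟩ ⟨hπ2, hb2, hab2⟩ heq
      have h : ∀ n : ℕ, (1 - π1) * b1 ^ n * Real.exp (-T * b1)
            + (1 - (1 - π1)) * a1 ^ n * Real.exp (-T * a1)
          = (1 - π2) * b2 ^ n * Real.exp (-T * b2)
            + (1 - (1 - π2)) * a2 ^ n * Real.exp (-T * a2) := by
        intro n
        have := congrFun heq n
        simp only [hp] at this
        linarith [this]
      obtain ⟨hπe, hbe, hae⟩ := mix_inj T (1 - π1) (1 - π2) b1 b2 a1 a2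
        ⟨by linarith [hπ1.2], by linarith [hπ1.1]⟩
        ⟨by linarith [hπ2.2], by linarith [hπ2.1]⟩ hb1 hab1 hb2 hab2 h
      have : π1 = π2 := by linarith
      simp_all
  · -- λ₂⁰ < λ₁⁰
    refine key (Set.Ioo (0:ℝ) 1 ×ˢ {x : ℝ × ℝ | 0 < x.2 ∧ x.2 < x.1}) ?_ ?_ ?_ ?_
    · exact isOpen_Ioo.prod
        ((isOpen_lt continuous_const continuous_snd).inter
          (isOpen_lt continuous_snd continuous_fst))
    · exact ⟨hπ, hl₂, hlt⟩
    · rintro ⟨a, b, c⟩ ⟨h1, h2, h3⟩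
      exact ⟨h1, lt_trans h2 h3, h2⟩
    · rintro ⟨π1, a1, b1⟩ ⟨hπ1, hb1, hab1⟩ ⟨π2, a2, b2⟩ ⟨hπ2, hb2, hab2⟩ heq
      have h : ∀ n : ℕ, π1 * a1 ^ n * Real.exp (-T * a1)
            + (1 - π1) * b1 ^ n * Real.exp (-T * b1)
          = π2 * a2 ^ n * Real.exp (-T * a2)
            + (1 - π2) * b2 ^ n * Real.exp (-T * b2) := by
        intro n
        have := congrFun heq n
        simp only [hp] at this
        exact this
      obtain ⟨hπe, hae, hbe⟩ := mix_inj T π1 π2 a1 a2 b1 b2 hπ1 hπ2 hb1 hab1 hb2 hab2 h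
      simp_all
end

section
/- Let h > 0, let M be a positive integer, let t₁, …, t_M ∈ ℝ, define λ(t) = Σ_{i=1}^{M} exp(−(t − t_i)²/(2h²)) and λ̂(ω) = ∫_ℝ λ(t) e^{−iωt} dt. For every ε > 0 and every ω₀ ≥ 0, if erf(h ω₀ / √2) ≥ 1 − ε/(π M), then ∫_{ω₀}^{∞} |λ̂(ω)| dω ≤ ε. -/
/-!
A single kernel has Fourier transform `√(2π) h e^{-iωtᵢ} e^{-h²ω²/2}` (translate it to the
origin and use the Fourier transform of a Gaussian), so `‖λ̂(ω)‖ ≤ M √(2π) h e^{-h²ω²/2}`.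
After the substitution `u = hω/√2`, the integral of this bound over `(ω₀, ∞)` is exactly
`M π (1 - erf (h ω₀ / √2))`, which the hypothesis on `ω₀` makes at most `ε`.
-/

open MeasureTheory Set Complex
open Real hiding exp

theorem integral_Ioi_exp_neg_sq (x : ℝ) :
    ∫ u in Ioi x, Real.exp (-u ^ 2) = √π / 2 - ∫ u in (0 : ℝ)..x, Real.exp (-u ^ 2) := by
  have hint : Integrable fun u : ℝ => Real.exp (-u ^ 2) := by
    simpa using integrable_exp_neg_mul_sq one_pos
  have hIoi : ∫ u in Ioi (0 : ℝ), Real.exp (-u ^ 2) = √π / 2 := by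
    simpa using integral_gaussian_Ioi 1
  rw [← intervalIntegral.integral_Ioi_sub_Ioi' hint.integrableOn hint.integrableOn, hIoi]
  ring

theorem integral_Ioi_exp_neg_mul_sq {b : ℝ} (hb : 0 < b) (x : ℝ) :
    ∫ ω in Ioi x, Real.exp (-b * ω ^ 2)
      = (√b)⁻¹ * (√π / 2 - ∫ u in (0 : ℝ)..√b * x, Real.exp (-u ^ 2)) := by
  have hsq : ∀ ω : ℝ, -b * ω ^ 2 = -(√b * ω) ^ 2 := fun ω => by
    rw [mul_pow, sq_sqrt hb.le]; ring
  simp_rw [hsq]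
  rw [integral_comp_mul_left_Ioi (fun u => Real.exp (-u ^ 2)) x (sqrt_pos.2 hb),
    integral_Ioi_exp_neg_sq, smul_eq_mul]

theorem integrable_gaussian_mul_cexp {h : ℝ} (hh : 0 < h) (c ω : ℝ) :
    Integrable fun s : ℝ => (Real.exp (-(s - c) ^ 2 / (2 * h ^ 2)) : ℂ) * cexp (-(I * ω * s)) := by
  have hb : 0 < (2 * h ^ 2)⁻¹ := by positivity
  have hg : Integrable fun s : ℝ => Real.exp (-(s - c) ^ 2 / (2 * h ^ 2)) := by
    refine ((integrable_exp_neg_mul_sq hb).comp_sub_right c).congr (ae_of_all _ fun s => ?_)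
    simp only
    ring_nf
  refine Integrable.mono' hg ?_ (ae_of_all _ fun s => ?_)
  · exact Continuous.aestronglyMeasurable (by fun_prop)
  have hI : -(I * ω * s) = (-(ω * s) : ℝ) * I := by push_cast; ring
  rw [norm_mul, hI, norm_exp_ofReal_mul_I, mul_one, norm_real,
    Real.norm_of_nonneg (Real.exp_nonneg _)]

theorem integral_gaussian_mul_cexp {h : ℝ} (hh : 0 < h) (c ω : ℝ) :
    ∫ s : ℝ, (Real.exp (-(s - c) ^ 2 / (2 * h ^ 2)) : ℂ) * cexp (-(I * ω * s))
      = (√(2 * π) * h * Real.exp (-(h ^ 2 / 2) * ω ^ 2) : ℝ) * cexp (-(I * ω * c)) := by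
  set b : ℂ := (((2 * h ^ 2)⁻¹ : ℝ) : ℂ) with hb_def
  have hb : 0 < b.re := by simp only [hb_def, ofReal_re]; positivity
  have hshift : ∀ u : ℝ,
      (Real.exp (-(u + c - c) ^ 2 / (2 * h ^ 2)) : ℂ) * cexp (-(I * ω * ↑(u + c))) =
        cexp (-(I * ω * c)) * (cexp (I * ↑(-ω) * u) * cexp (-b * u ^ 2)) := fun u => by
    rw [ofReal_exp, ← Complex.exp_add, ← Complex.exp_add, ← Complex.exp_add, hb_def]
    congr 1
    push_cast
    field_simp
    ring
  rw [← integral_add_right_eq_self _ c]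
  simp_rw [hshift]
  rw [integral_const_mul, fourierIntegral_gaussian hb, mul_comm]
  congr 1
  have hpow : (π / b) ^ (1 / 2 : ℂ) = ((√(2 * π) * h : ℝ) : ℂ) := by
    rw [hb_def, ← ofReal_div, show (1 / 2 : ℂ) = ((1 / 2 : ℝ) : ℂ) by norm_num,
      ← ofReal_cpow (by positivity), ← sqrt_eq_rpow, div_inv_eq_mul,
      show π * (2 * h ^ 2) = 2 * π * h ^ 2 by ring, sqrt_mul (by positivity), sqrt_sq hh.le]
  rw [hpow, ofReal_mul (√(2 * π) * h), ofReal_exp]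
  congr 2
  rw [hb_def]
  push_cast
  field_simp
  ring

theorem integral_sum_gaussian_mul_cexp {ι : Type*} (S : Finset ι) (t : ι → ℝ) {h : ℝ}
    (hh : 0 < h) (ω : ℝ) :
    ∫ s : ℝ, ((∑ i ∈ S, Real.exp (-(s - t i) ^ 2 / (2 * h ^ 2)) : ℝ) : ℂ) * cexp (-(I * ω * s))
      = (√(2 * π) * h * Real.exp (-(h ^ 2 / 2) * ω ^ 2) : ℝ) * ∑ i ∈ S, cexp (-(I * ω * t i)) := by
  simp_rw [ofReal_sum, Finset.sum_mul]
  rw [integral_finsetSum S fun i _ => integrable_gaussian_mul_cexp hh (t i) ω, Finset.mul_sum]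
  exact Finset.sum_congr rfl fun i _ => integral_gaussian_mul_cexp hh (t i) ω

theorem norm_integral_sum_gaussian_mul_cexp_le {ι : Type*} (S : Finset ι) (t : ι → ℝ) {h : ℝ}
    (hh : 0 < h) (ω : ℝ) :
    ‖∫ s : ℝ, ((∑ i ∈ S, Real.exp (-(s - t i) ^ 2 / (2 * h ^ 2)) : ℝ) : ℂ) * cexp (-(I * ω * s))‖
      ≤ S.card * (√(2 * π) * h * Real.exp (-(h ^ 2 / 2) * ω ^ 2)) := by
  have hunit : ∀ i ∈ S, ‖cexp (-(I * ω * t i))‖ ≤ 1 := fun i _ => by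
    rw [show -(I * ω * t i) = (-(ω * t i) : ℝ) * I by push_cast; ring, norm_exp_ofReal_mul_I]
  rw [integral_sum_gaussian_mul_cexp S t hh, norm_mul, norm_real,
    Real.norm_of_nonneg (by positivity), mul_comm]
  gcongr
  simpa using norm_sum_le_of_le S hunit

theorem gaussian_kde_cutoff_criterion_general
    (h : ℝ) (hh : 0 < h) (M : ℕ) (hM : 0 < M) (t : Fin M → ℝ)
    (lam : ℝ → ℝ)
    (hlam : ∀ s : ℝ, lam s = ∑ i, Real.exp (-(s - t i) ^ 2 / (2 * h ^ 2)))
    (lamhat : ℝ → ℂ)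
    (hlamhat : ∀ ω : ℝ,
      lamhat ω = ∫ s : ℝ, (lam s : ℂ) * Complex.exp (-(Complex.I * ω * s)))
    (erf : ℝ → ℝ)
    (herf : ∀ x : ℝ, erf x = 2 / Real.sqrt Real.pi * ∫ u in (0 : ℝ)..x, Real.exp (-u ^ 2))
    (ε : ℝ) (ω₀ : ℝ)
    (hcut : erf (h * ω₀ / Real.sqrt 2) ≥ 1 - ε / (Real.pi * M)) :
    (∫ ω in Set.Ioi ω₀, ‖lamhat ω‖) ≤ ε := by
  have hbound : ∀ ω, ‖lamhat ω‖ ≤ M * (√(2 * π) * h * Real.exp (-(h ^ 2 / 2) * ω ^ 2)) :=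
    fun ω => by
      have := norm_integral_sum_gaussian_mul_cexp_le Finset.univ t hh ω
      rw [Finset.card_univ, Fintype.card_fin] at this
      simpa only [hlamhat, hlam] using this
  have hb : 0 < h ^ 2 / 2 := by positivity
  have htail : ∫ ω in Ioi ω₀, M * (√(2 * π) * h * Real.exp (-(h ^ 2 / 2) * ω ^ 2))
      = M * π * (1 - erf (h * ω₀ / √2)) := by
    have hsqrt : √(h ^ 2 / 2) = h / √2 := by rw [sqrt_div' _ zero_le_two, sqrt_sq hh.le]
    have h2 : √2 ^ 2 = 2 := sq_sqrt zero_le_two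
    have hπ : √π ^ 2 = π := sq_sqrt pi_pos.le
    rw [integral_const_mul, integral_const_mul, integral_Ioi_exp_neg_mul_sq hb, hsqrt, herf,
      sqrt_mul zero_le_two]
    field_simp
    set J := ∫ u in (0 : ℝ)..h * ω₀ / √2, Real.exp (-u ^ 2)
    linear_combination (√π ^ 3 - 2 * J * √π ^ 2) * h2 + (2 * √π - 4 * J) * hπ
  have hMπ : 0 < (M : ℝ) * π := by positivity
  calc ∫ ω in Ioi ω₀, ‖lamhat ω‖
      ≤ ∫ ω in Ioi ω₀, M * (√(2 * π) * h * Real.exp (-(h ^ 2 / 2) * ω ^ 2)) :=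
        integral_mono_of_nonneg (ae_of_all _ fun ω => norm_nonneg _)
          (((integrable_exp_neg_mul_sq hb).const_mul _).const_mul _).integrableOn
          (ae_of_all _ hbound)
    _ = M * π * (1 - erf (h * ω₀ / √2)) := htail
    _ ≤ M * π * (ε / (π * M)) := by gcongr; linarith
    _ = ε := by field_simp

/-- **Cut-off frequency criterion for the basis selection algorithm.**
If `λ(t) = Σ_{i=1}^{M} exp(−(t − t_i)²/(2h²))`, `λ̂(ω) = ∫ λ(t) e^{−iωt} dt`,
and `erf(h ω₀ / √2) ≥ 1 − ε/(π M)`, then `∫_{ω₀}^∞ |λ̂(ω)| dω ≤ ε`. -/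
theorem gaussian_kde_cutoff_criterion
    (h : ℝ) (hh : 0 < h) (M : ℕ) (hM : 0 < M) (t : Fin M → ℝ)
    (lam : ℝ → ℝ)
    (hlam : ∀ s : ℝ, lam s = ∑ i, Real.exp (-(s - t i) ^ 2 / (2 * h ^ 2)))
    (lamhat : ℝ → ℂ)
    (hlamhat : ∀ ω : ℝ,
      lamhat ω = ∫ s : ℝ, (lam s : ℂ) * Complex.exp (-(Complex.I * ω * s)))
    (erf : ℝ → ℝ)
    (herf : ∀ x : ℝ, erf x = 2 / Real.sqrt Real.pi * ∫ u in (0 : ℝ)..x, Real.exp (-u ^ 2))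
    (ε : ℝ) (hε : 0 < ε) (ω₀ : ℝ) (hω₀ : 0 ≤ ω₀)
    (hcut : erf (h * ω₀ / Real.sqrt 2) ≥ 1 - ε / (Real.pi * M)) :
    (∫ ω in Set.Ioi ω₀, ‖lamhat ω‖) ≤ ε :=
  gaussian_kde_cutoff_criterion_general h hh M hM t lam hlam lamhat hlamhat erf herf ε ω₀ hcut
end
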